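/- arXiv:math/0109040 — 2 statements merged into one kernel-verified Lean document; each statement's English description precedes it below -/
import Mathlib

section
/- Let σ ∈ (0,1), λ > 1, σ_N = ∑_{k=1}^N σ^k, T = σ/(1-σ), ρ_N = ∑_{j=1}^N σ^{j/2}, ρ_∞ = √σ/(1-√σ). Suppose Z : [0,T) × ℝ³ → ℝ satisfies Z(σ_N, x) = λ^N whenever x_1² + x_2² = ρ_N² and x_3 = 0. Then every point of the circle S = { (T, x) : x_1² + x_2² = ρ_∞², x_3 = 0 } is a singular point of Z, so the singular set of Z has ℋ¹-measure at least 2πρ_∞ > 0. -/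
open Real MeasureTheory

noncomputable def vec3 (a b c : ℝ) : EuclideanSpace ℝ (Fin 3) :=
  (WithLp.equiv 2 (Fin 3 → ℝ)).symm ![a, b, c]

@[simp] lemma vec3_apply0 (a b c : ℝ) : vec3 a b c 0 = a := rfl
@[simp] lemma vec3_apply1 (a b c : ℝ) : vec3 a b c 1 = b := rfl
@[simp] lemma vec3_apply2 (a b c : ℝ) : vec3 a b c 2 = c := rfl

lemma vec3_inner (a b c : ℝ) (x : EuclideanSpace ℝ (Fin 3)) :
    inner ℝ (vec3 a b c) x = a * x 0 + b * x 1 + c * x 2 := by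
  simp [PiLp.inner_apply, Fin.sum_univ_three, mul_comm]

lemma norm3 (x : EuclideanSpace ℝ (Fin 3)) :
    ‖x‖ = Real.sqrt (x 0 ^ 2 + x 1 ^ 2 + x 2 ^ 2) := by
  rw [EuclideanSpace.norm_eq]
  simp [Fin.sum_univ_three, Real.norm_eq_abs, sq_abs]

lemma vec3_add (a b c a' b' c' : ℝ) :
    vec3 a b c + vec3 a' b' c' = vec3 (a+a') (b+b') (c+c') := by
  ext i; fin_cases i <;> simp [vec3]

lemma lip_inner (v : EuclideanSpace ℝ (Fin 3)) (hv : ‖v‖ = 1) :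
    LipschitzWith 1 (fun p : ℝ × EuclideanSpace ℝ (Fin 3) => (inner ℝ v p.2 : ℝ)) := by
  refine LipschitzWith.of_dist_le_mul fun p q => ?_
  rw [Real.dist_eq, ← inner_sub_right]
  calc |(inner ℝ v (p.2 - q.2) : ℝ)| ≤ ‖v‖ * ‖p.2 - q.2‖ := abs_real_inner_le_norm _ _
    _ = dist p.2 q.2 := by rw [hv, one_mul, dist_eq_norm]
    _ ≤ dist p q := by rw [Prod.dist_eq]; exact le_max_right _ _
    _ = ((1:NNReal):ℝ) * dist p q := by rw [NNReal.coe_one, one_mul]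

lemma norm_vec3_unit_add (a b : ℝ) :
    ‖vec3 (Real.cos a) (Real.sin a) 0 + vec3 (Real.cos b) (Real.sin b) 0‖ =
      2 * |Real.cos ((b - a) / 2)| := by
  rw [vec3_add, norm3]
  simp only [vec3_apply0, vec3_apply1, vec3_apply2, add_zero]
  have hcc : Real.cos (b - a) =
      Real.cos b * Real.cos a + Real.sin b * Real.sin a := Real.cos_sub _ _
  have h2δ : Real.cos (2 * ((b - a) / 2)) = 2 * Real.cos ((b - a) / 2) ^ 2 - 1 :=
    Real.cos_two_mul _
  rw [show 2 * ((b - a) / 2) = b - a by ring] at h2δ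
  have h1 := Real.sin_sq_add_cos_sq a
  have h2 := Real.sin_sq_add_cos_sq b
  have hinside : (Real.cos a + Real.cos b) ^ 2 +
      (Real.sin a + Real.sin b) ^ 2 + 0 ^ 2 = (2 * |Real.cos ((b - a) / 2)|) ^ 2 := by
    rw [show (2 * |Real.cos ((b - a) / 2)|) ^ 2 = 4 * Real.cos ((b - a) / 2) ^ 2 by
      rw [mul_pow, sq_abs]; ring]
    nlinarith
  rw [hinside, Real.sqrt_sq (by positivity)]

set_option maxHeartbeats 1000000 in
lemma circle_lower (Tc ρ : ℝ) (hρ : 0 < ρ) :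
    ENNReal.ofReal (2 * π * ρ) ≤
      μH[1] {p : ℝ × EuclideanSpace ℝ (Fin 3) |
        p.1 = Tc ∧ p.2 0 ^ 2 + p.2 1 ^ 2 = ρ ^ 2 ∧ p.2 2 = 0} := by
  set S : Set (ℝ × EuclideanSpace ℝ (Fin 3)) :=
    {p | p.1 = Tc ∧ p.2 0 ^ 2 + p.2 1 ^ 2 = ρ ^ 2 ∧ p.2 2 = 0} with hSdef
  have hSmeas : MeasurableSet S := by
    have h0 : Continuous fun p : ℝ × EuclideanSpace ℝ (Fin 3) => p.2 0 :=
      (EuclideanSpace.proj (0 : Fin 3)).continuous.comp continuous_snd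
    have h1 : Continuous fun p : ℝ × EuclideanSpace ℝ (Fin 3) => p.2 1 :=
      (EuclideanSpace.proj (1 : Fin 3)).continuous.comp continuous_snd
    have h2 : Continuous fun p : ℝ × EuclideanSpace ℝ (Fin 3) => p.2 2 :=
      (EuclideanSpace.proj (2 : Fin 3)).continuous.comp continuous_snd
    have : IsClosed S := by
      rw [hSdef]
      simp only [Set.setOf_and]
      exact (isClosed_eq continuous_fst continuous_const).inter
        ((isClosed_eq ((h0.pow 2).add (h1.pow 2)) continuous_const).inter
          (isClosed_eq h2 continuous_const))
    exact this.measurableSet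
  -- Key claim: for all m ≥ 4 the measure is ≥ m * (2 ρ sin (π/m))
  have key : ∀ m : ℕ, 4 ≤ m →
      ENNReal.ofReal ((m : ℝ) * (2 * ρ * Real.sin (π / m))) ≤ μH[1] S := by
    intro m hm
    have hm0 : (0:ℝ) < m := by positivity
    set θ : ℝ := π / m with hθdef
    have hθ0 : 0 < θ := by positivity
    have hθ4 : θ ≤ π / 4 := by
      rw [hθdef]
      apply div_le_div_of_nonneg_left pi_pos.le (by norm_num)
      exact_mod_cast hm
    have hθ1 : θ ≤ 1 := hθ4.trans (by nlinarith [pi_le_four])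
    have hθ2 : θ ≤ π / 2 := hθ4.trans (by nlinarith [pi_pos])
    have hcosθ : 0 ≤ Real.cos θ := Real.cos_nonneg_of_mem_Icc ⟨by linarith, hθ2⟩
    set c : ℕ → ℝ := fun i => (2 * (i:ℝ) + 1) * θ with hcdef
    set v : ℕ → EuclideanSpace ℝ (Fin 3) :=
      fun i => vec3 (Real.cos (c i)) (Real.sin (c i)) 0 with hvdef
    set w : ℕ → EuclideanSpace ℝ (Fin 3) :=
      fun i => vec3 (-Real.sin (c i)) (Real.cos (c i)) 0 with hwdef
    set A : ℕ → Set (ℝ × EuclideanSpace ℝ (Fin 3)) :=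
      fun i => S ∩ {p | ρ * Real.cos θ < inner ℝ (v i) p.2} with hAdef
    have hAmeas : ∀ i, MeasurableSet (A i) := by
      intro i
      apply hSmeas.inter
      have : Continuous fun p : ℝ × EuclideanSpace ℝ (Fin 3) => (inner ℝ (v i) p.2 : ℝ) :=
        (innerSL ℝ (v i)).continuous.comp continuous_snd
      exact (isOpen_lt continuous_const this).measurableSet
    -- each arc has measure at least 2 ρ sin θ
    have harc : ∀ i, ENNReal.ofReal (2 * ρ * Real.sin θ) ≤ μH[1] (A i) := by
      intro i
      have hw1 : ‖w i‖ = 1 := by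
        rw [hwdef]; rw [norm3]
        simp only [vec3_apply0, vec3_apply1, vec3_apply2]
        rw [show (-Real.sin (c i)) ^ 2 + Real.cos (c i) ^ 2 + 0 ^ 2 = 1 by
          nlinarith [Real.sin_sq_add_cos_sq (c i)]]
        exact Real.sqrt_one
      have hlip := lip_inner (w i) hw1
      have himg : Set.Ioo (-(ρ * Real.sin θ)) (ρ * Real.sin θ) ⊆
          (fun p : ℝ × EuclideanSpace ℝ (Fin 3) => (inner ℝ (w i) p.2 : ℝ)) '' A i := by
        rintro s ⟨hs1, hs2⟩
        have hsinθ0 : 0 < Real.sin θ := Real.sin_pos_of_pos_of_lt_pi hθ0 (by linarith [pi_pos])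
        have habs : |s| < ρ * Real.sin θ := abs_lt.2 ⟨hs1, hs2⟩
        have hsρ : |s / ρ| < Real.sin θ := by
          rw [abs_div, abs_of_pos hρ, div_lt_iff₀ hρ]; linarith [habs]
        have hsρ1 : |s / ρ| ≤ 1 := hsρ.le.trans (Real.sin_le_one θ)
        set φ := Real.arcsin (s / ρ) with hφdef
        set x := vec3 (ρ * Real.cos (c i + φ)) (ρ * Real.sin (c i + φ)) 0 with hxdef
        refine ⟨(Tc, x), ⟨⟨rfl, ?_, rfl⟩, ?_⟩, ?_⟩
        · simp only [hxdef, vec3_apply0, vec3_apply1]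
          nlinarith [Real.sin_sq_add_cos_sq (c i + φ)]
        · show ρ * Real.cos θ < inner ℝ (v i) x
          rw [hvdef, hxdef]
          simp only [vec3_inner, vec3_apply0, vec3_apply1, vec3_apply2, mul_zero, zero_mul,
            add_zero]
          have : Real.cos (c i) * (ρ * Real.cos (c i + φ)) +
              Real.sin (c i) * (ρ * Real.sin (c i + φ)) = ρ * Real.cos φ := by
            have h := Real.cos_sub (c i + φ) (c i)
            rw [add_sub_cancel_left] at h
            rw [h]; ring
          rw [this]
          have hcφ : Real.cos φ = Real.sqrt (1 - (s/ρ)^2) := Real.cos_arcsin _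
          have hgt : Real.cos θ < Real.cos φ := by
            rw [hcφ]
            have h1 : Real.cos θ = Real.sqrt (Real.cos θ ^ 2) :=
              (Real.sqrt_sq hcosθ).symm
            rw [h1]
            apply Real.sqrt_lt_sqrt (by positivity)
            have : (s/ρ)^2 < Real.sin θ ^ 2 := by
              have := sq_lt_sq' (neg_lt_of_abs_lt hsρ) (lt_of_abs_lt hsρ)
              simpa using this
            nlinarith [Real.sin_sq_add_cos_sq θ]
          nlinarith
        · show (inner ℝ (w i) x : ℝ) = s
          rw [hwdef, hxdef]
          simp only [vec3_inner, vec3_apply0, vec3_apply1, vec3_apply2, mul_zero, zero_mul,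
            add_zero]
          have h := Real.sin_sub (c i + φ) (c i)
          rw [add_sub_cancel_left] at h
          have : -Real.sin (c i) * (ρ * Real.cos (c i + φ)) +
              Real.cos (c i) * (ρ * Real.sin (c i + φ)) = ρ * Real.sin φ := by
            rw [show Real.sin φ = Real.sin (c i + φ) * Real.cos (c i) -
              Real.cos (c i + φ) * Real.sin (c i) from h]; ring
          rw [this, hφdef, Real.sin_arcsin (by linarith [abs_le.1 hsρ1]) (abs_le.1 hsρ1).2]
          field_simp
      calc ENNReal.ofReal (2 * ρ * Real.sin θ)
          = volume (Set.Ioo (-(ρ * Real.sin θ)) (ρ * Real.sin θ)) := by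
            rw [Real.volume_Ioo]; congr 1; ring
        _ = μH[1] (Set.Ioo (-(ρ * Real.sin θ)) (ρ * Real.sin θ)) := by
            rw [MeasureTheory.hausdorffMeasure_real]
        _ ≤ μH[1] ((fun p : ℝ × EuclideanSpace ℝ (Fin 3) => (inner ℝ (w i) p.2 : ℝ)) '' A i) :=
            measure_mono himg
        _ ≤ (1:ENNReal) ^ (1:ℝ) * μH[1] (A i) := hlip.hausdorffMeasure_image_le zero_le_one _
        _ = μH[1] (A i) := by simp
    -- the arcs are pairwise disjoint
    have hdisj : (↑(Finset.range m) : Set ℕ).PairwiseDisjoint A := by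
      have key2 : ∀ i j, i ∈ Finset.range m → j ∈ Finset.range m → i < j →
          Disjoint (A i) (A j) := by
        intro i j hi hj hij
        rw [Set.disjoint_left]
        rintro p ⟨⟨hT, hcirc, hz⟩, hpi⟩ ⟨-, hpj⟩
        simp only [Set.mem_setOf_eq] at hpi hpj
        have hxnorm : ‖p.2‖ = ρ := by
          rw [norm3, hz, hcirc]
          rw [show ρ ^ 2 + 0 ^ 2 = ρ ^ 2 by ring]
          exact Real.sqrt_sq hρ.le
        set δ : ℝ := ((j:ℝ) - (i:ℝ)) * θ with hδdef
        have hδθ : θ ≤ δ := by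
          rw [hδdef]
          have : (1:ℝ) ≤ (j:ℝ) - (i:ℝ) := by
            have : i + 1 ≤ j := hij
            have := (Nat.cast_le (α := ℝ)).2 this
            push_cast at this ⊢; linarith
          nlinarith
        have hδπ : δ ≤ π - θ := by
          rw [hδdef]
          have hjm : (j:ℝ) ≤ (m:ℝ) - 1 := by
            have : j + 1 ≤ m := Finset.mem_range.1 hj
            have := (Nat.cast_le (α := ℝ)).2 this
            push_cast at this ⊢; linarith
          have : ((j:ℝ) - (i:ℝ)) * θ ≤ ((m:ℝ) - 1) * θ := by
            apply mul_le_mul_of_nonneg_right _ hθ0.le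
            have : (0:ℝ) ≤ (i:ℝ) := Nat.cast_nonneg i
            linarith
          calc ((j:ℝ) - (i:ℝ)) * θ ≤ ((m:ℝ) - 1) * θ := this
            _ = (m:ℝ) * θ - θ := by ring
            _ = π - θ := by rw [hθdef]; field_simp
        have hcosδ : |Real.cos δ| ≤ Real.cos θ := by
          rw [abs_le]
          constructor
          · have := Real.cos_le_cos_of_nonneg_of_le_pi (by linarith : (0:ℝ) ≤ δ)
              (by linarith [pi_pos] : π - θ ≤ π) hδπ
            rw [Real.cos_pi_sub] at this
            linarith
          · exact Real.cos_le_cos_of_nonneg_of_le_pi hθ0.le (by linarith) hδθ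
        have hsum : 2 * (ρ * Real.cos θ) < (inner ℝ (v i + v j) p.2 : ℝ) := by
          rw [inner_add_left]; linarith
        have hCS : (inner ℝ (v i + v j) p.2 : ℝ) ≤ ‖v i + v j‖ * ‖p.2‖ :=
          real_inner_le_norm _ _
        have hnorm_sum : ‖v i + v j‖ = 2 * |Real.cos δ| := by
          rw [hvdef]
          have hcji : (c j - c i) / 2 = δ := by rw [hcdef, hδdef]; push_cast; ring
          rw [norm_vec3_unit_add (c i) (c j), hcji]
        rw [hnorm_sum, hxnorm] at hCS
        nlinarith
      intro i hi j hj hij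
      rcases lt_or_gt_of_ne hij with h | h
      · exact key2 i j hi hj h
      · exact (key2 j i hj hi h).symm
    -- sum up
    have hsub : (⋃ i ∈ Finset.range m, A i) ⊆ S := by
      intro p hp
      rcases Set.mem_iUnion₂.1 hp with ⟨i, _, hpi⟩
      exact hpi.1
    calc ENNReal.ofReal ((m : ℝ) * (2 * ρ * Real.sin θ))
        = ∑ _i ∈ Finset.range m, ENNReal.ofReal (2 * ρ * Real.sin θ) := by
          rw [Finset.sum_const, Finset.card_range, nsmul_eq_mul,
            ← ENNReal.ofReal_natCast m, ← ENNReal.ofReal_mul (Nat.cast_nonneg m)]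
      _ ≤ ∑ i ∈ Finset.range m, μH[1] (A i) := Finset.sum_le_sum fun i _ => harc i
      _ = μH[1] (⋃ i ∈ Finset.range m, A i) :=
          (measure_biUnion_finset hdisj fun i _ => hAmeas i).symm
      _ ≤ μH[1] S := measure_mono hsub
  -- pass to the limit
  apply le_of_forall_lt
  intro b hb
  have hbne : b ≠ ⊤ := hb.ne_top
  have hbtr : b.toReal < 2 * π * ρ := by
    have := ENNReal.toReal_lt_toReal hbne ENNReal.ofReal_ne_top |>.2 hb
    rwa [ENNReal.toReal_ofReal (by positivity)] at this
  set ε : ℝ := 2 * π * ρ - b.toReal with hεdef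
  have hε : 0 < ε := by linarith
  -- choose m ≥ 4 with 2ρπ³/(4m) < ε
  obtain ⟨m₀, hm₀⟩ := exists_nat_gt (2 * ρ * π ^ 3 / (4 * ε))
  set m := max (m₀ + 1) 4 with hmdef
  have hm4 : 4 ≤ m := le_max_right _ _
  have hmgt : (2 * ρ * π ^ 3 / (4 * ε)) < m := by
    calc (2 * ρ * π ^ 3 / (4 * ε)) < m₀ := hm₀
      _ ≤ (m:ℝ) := by
        have : m₀ ≤ m := le_trans (Nat.le_succ _) (le_max_left _ _)
        exact_mod_cast this
  have hm0 : (0:ℝ) < m := by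
    have : (4:ℝ) ≤ m := by exact_mod_cast hm4
    linarith
  have hθ : (0:ℝ) < π / m := by positivity
  have hθ1 : π / m ≤ 1 := by
    rw [div_le_one hm0]
    calc π ≤ 4 := pi_le_four
      _ ≤ (m:ℝ) := by exact_mod_cast hm4
  have hsin : π / m - (π / m) ^ 3 / 4 < Real.sin (π / m) := by
    have := Real.sin_gt_sub_cube hθ
    nlinarith [pow_pos hθ 3]
  have hbound : 2 * π * ρ - ε < (m : ℝ) * (2 * ρ * Real.sin (π / m)) := by
    have h1 : (m:ℝ) * (2 * ρ * Real.sin (π / m)) >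
        (m:ℝ) * (2 * ρ * (π / m - (π / m) ^ 3 / 4)) := by
      apply mul_lt_mul_of_pos_left _ hm0
      apply mul_lt_mul_of_pos_left hsin (by positivity)
    have h2 : (m:ℝ) * (2 * ρ * (π / m - (π / m) ^ 3 / 4)) =
        2 * ρ * π - 2 * ρ * π ^ 3 / (4 * m ^ 2) := by
      field_simp
    have hm4' : (4:ℝ) ≤ m := by exact_mod_cast hm4
    have h3 : 2 * ρ * π ^ 3 / (4 * (m:ℝ) ^ 2) ≤ 2 * ρ * π ^ 3 / (4 * m) := by
      apply div_le_div_of_nonneg_left (by positivity) (by positivity)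
      nlinarith
    have h4 : 2 * ρ * π ^ 3 / (4 * (m:ℝ)) < ε := by
      rw [div_lt_iff₀ (by positivity)] at hmgt ⊢
      nlinarith
    nlinarith
  calc b = ENNReal.ofReal b.toReal := (ENNReal.ofReal_toReal hbne).symm
    _ < ENNReal.ofReal ((m : ℝ) * (2 * ρ * Real.sin (π / m))) := by
        have hsin0 : 0 < Real.sin (π / m) := by
          have hcube : (π / (m:ℝ)) ^ 3 ≤ π / (m:ℝ) := pow_le_of_le_one hθ.le hθ1 (by norm_num)
          linarith
        apply (ENNReal.ofReal_lt_ofReal_iff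
          (mul_pos hm0 (mul_pos (by positivity) hsin0))).2
        rw [hεdef] at hbound; linarith
    _ ≤ μH[1] S := key m hm4


/-- if `Z(σ_N, x) = λ^N` on the circle of radius `ρ_N`, then every point
of the circle `S = {(T,x) : x₁²+x₂² = ρ_∞², x₃ = 0}` is a singular point of `Z`
(Z is unbounded near each such space-time point), so the singular set of `Z` has
`ℋ¹`-measure at least `2πρ_∞ > 0`. -/
theorem stmt9 (σ lam : ℝ) (hσ : σ ∈ Set.Ioo (0:ℝ) 1) (hlam : 1 < lam)
    (σp : ℕ → ℝ) (hσp : ∀ N, σp N = ∑ k ∈ Finset.range N, σ ^ (k + 1))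
    (T : ℝ) (hT : T = σ / (1 - σ))
    (ρ : ℕ → ℝ) (hρ : ∀ N, ρ N = ∑ j ∈ Finset.range N, Real.sqrt σ ^ (j + 1))
    (ρinf : ℝ) (hρinf : ρinf = Real.sqrt σ / (1 - Real.sqrt σ))
    (Z : ℝ → EuclideanSpace ℝ (Fin 3) → ℝ)
    (hZ : ∀ N ≥ 1, ∀ x : EuclideanSpace ℝ (Fin 3),
        x 0 ^ 2 + x 1 ^ 2 = ρ N ^ 2 → x 2 = 0 → Z (σp N) x = lam ^ N)
    (Sing : Set (ℝ × EuclideanSpace ℝ (Fin 3)))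
    (hSing : Sing = {p : ℝ × EuclideanSpace ℝ (Fin 3) |
        ∀ ε > 0, ∀ M : ℝ, ∃ q : ℝ × EuclideanSpace ℝ (Fin 3),
          q.1 ∈ Set.Ico (0:ℝ) T ∧ dist q p < ε ∧ M < |Z q.1 q.2|}) :
    (∀ x : EuclideanSpace ℝ (Fin 3),
        x 0 ^ 2 + x 1 ^ 2 = ρinf ^ 2 → x 2 = 0 → (T, x) ∈ Sing) ∧
    ENNReal.ofReal (2 * Real.pi * ρinf) ≤ μH[1] Sing ∧ 0 < μH[1] Sing := by
  have hρpos : 0 < ρinf := by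
    have hs0 : 0 < Real.sqrt σ := Real.sqrt_pos.2 hσ.1
    have hs1 : Real.sqrt σ < 1 := by
      rw [show (1:ℝ) = Real.sqrt 1 from Real.sqrt_one.symm]
      exact Real.sqrt_lt_sqrt hσ.1.le hσ.2
    rw [hρinf]; exact div_pos hs0 (by linarith)
  have part1 : ∀ x : EuclideanSpace ℝ (Fin 3),
      x 0 ^ 2 + x 1 ^ 2 = ρinf ^ 2 → x 2 = 0 → (T, x) ∈ Sing := by
      obtain ⟨hσ0, hσ1⟩ := hσ
      have hs0 : 0 < Real.sqrt σ := Real.sqrt_pos.2 hσ0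
      have hs1 : Real.sqrt σ < 1 := by
        rw [show (1:ℝ) = Real.sqrt 1 from Real.sqrt_one.symm]
        exact Real.sqrt_lt_sqrt hσ0.le hσ1
      have h1s : 0 < 1 - Real.sqrt σ := by linarith
      have h1σ : 0 < 1 - σ := by linarith
      have hρpos : 0 < ρinf := by rw [hρinf]; exact div_pos hs0 h1s
      -- tendsto facts
      have hσtend : Filter.Tendsto σp Filter.atTop (nhds T) := by
        have h := (hasSum_geometric_of_lt_one hσ0.le hσ1).mul_left σ
        have h2 : HasSum (fun k : ℕ => σ ^ (k + 1)) (σ / (1 - σ)) := by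
          simpa [div_eq_mul_inv, pow_succ'] using h
        have h3 := h2.tendsto_sum_nat
        have : σp = fun N => ∑ k ∈ Finset.range N, σ ^ (k + 1) := funext hσp
        rw [this, hT]; exact h3
      have hρtend : Filter.Tendsto ρ Filter.atTop (nhds ρinf) := by
        have h := (hasSum_geometric_of_lt_one hs0.le hs1).mul_left (Real.sqrt σ)
        have h2 : HasSum (fun k : ℕ => Real.sqrt σ ^ (k + 1))
            (Real.sqrt σ / (1 - Real.sqrt σ)) := by
          simpa [div_eq_mul_inv, pow_succ'] using h
        have h3 := h2.tendsto_sum_nat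
        have : ρ = fun N => ∑ k ∈ Finset.range N, Real.sqrt σ ^ (k + 1) := funext hρ
        rw [this, hρinf]; exact h3
      have hlamtend : Filter.Tendsto (fun N : ℕ => lam ^ N) Filter.atTop Filter.atTop :=
        tendsto_pow_atTop_atTop_of_one_lt hlam
      intro x hx1 hx2
      rw [hSing]
      intro ε hε M
      have h1 : ∀ᶠ N in Filter.atTop, dist (σp N) T < ε := by
        obtain ⟨N₀, h⟩ := Metric.tendsto_atTop.1 hσtend ε hε
        exact Filter.eventually_atTop.2 ⟨N₀, h⟩
      have h2 : ∀ᶠ N in Filter.atTop, dist (ρ N) ρinf < ε := by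
        obtain ⟨N₀, h⟩ := Metric.tendsto_atTop.1 hρtend ε hε
        exact Filter.eventually_atTop.2 ⟨N₀, h⟩
      have h3 : ∀ᶠ N in Filter.atTop, M < lam ^ N := hlamtend.eventually_gt_atTop M
      have h4 : ∀ᶠ N in Filter.atTop, 1 ≤ N := Filter.eventually_ge_atTop 1
      obtain ⟨N, ⟨⟨hd1, hd2⟩, hM, hN1⟩⟩ := ((h1.and h2).and (h3.and h4)).exists
      set cN : ℝ := ρ N / ρinf with hcNdef
      set xN : EuclideanSpace ℝ (Fin 3) := cN • x with hxNdef
      have hxNapp : ∀ i, xN i = cN * x i := fun i => rfl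
      have hcNρ : cN * ρinf = ρ N := div_mul_cancel₀ _ hρpos.ne'
      have hρN0 : 0 ≤ ρ N := by
        rw [hρ]
        exact Finset.sum_nonneg fun k _ => pow_nonneg hs0.le _
      have hσpN0 : 0 ≤ σp N := by
        rw [hσp]
        exact Finset.sum_nonneg fun k _ => pow_nonneg hσ0.le _
      have hσpNT : σp N < T := by
        have hgs : σp N = σ * ((σ ^ N - 1) / (σ - 1)) := by
          rw [hσp, ← geom_sum_eq hσ1.ne N, Finset.mul_sum]
          exact Finset.sum_congr rfl fun k _ => pow_succ' σ k
        have hne : σ - 1 ≠ 0 := by linarith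
        have hgs2 : σp N = σ * (1 - σ ^ N) / (1 - σ) := by
          rw [hgs]; field_simp; ring
        rw [hgs2, hT, div_lt_div_iff₀ h1σ h1σ]
        nlinarith [mul_pos (mul_pos hσ0 (pow_pos hσ0 N)) h1σ]
      refine ⟨(σp N, xN), ⟨hσpN0, hσpNT⟩, ?_, ?_⟩
      · rw [Prod.dist_eq]
        apply max_lt hd1
        have : dist xN x = |ρ N - ρinf| := by
          rw [dist_eq_norm, hxNdef, show cN • x - x = (cN - 1) • x by
            rw [sub_smul, one_smul], norm_smul, Real.norm_eq_abs, norm3 x, hx2, hx1]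
          rw [show ρinf ^ 2 + 0 ^ 2 = ρinf ^ 2 by ring, Real.sqrt_sq hρpos.le]
          rw [show |cN - 1| * ρinf = |(cN - 1) * ρinf| by rw [abs_mul, abs_of_pos hρpos]]
          congr 1
          rw [sub_mul, one_mul, hcNρ]
        rw [this]
        rwa [Real.dist_eq] at hd2
      · have hZval : Z (σp N) xN = lam ^ N := by
          apply hZ N hN1
          · rw [hxNapp 0, hxNapp 1]
            calc (cN * x 0) ^ 2 + (cN * x 1) ^ 2 = cN ^ 2 * (x 0 ^ 2 + x 1 ^ 2) := by ring
              _ = (cN * ρinf) ^ 2 := by rw [hx1]; ring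
              _ = ρ N ^ 2 := by rw [hcNρ]
          · rw [hxNapp 2, hx2, mul_zero]
        show M < |Z (σp N) xN|
        rw [hZval, abs_of_pos (pow_pos (by linarith) N)]
        exact hM

  have hsub : {p : ℝ × EuclideanSpace ℝ (Fin 3) |
      p.1 = T ∧ p.2 0 ^ 2 + p.2 1 ^ 2 = ρinf ^ 2 ∧ p.2 2 = 0} ⊆ Sing := by
    rintro ⟨t, y⟩ ⟨ht, hy1, hy2⟩
    simp only at ht hy1 hy2
    subst ht
    exact part1 y hy1 hy2
  have hge : ENNReal.ofReal (2 * Real.pi * ρinf) ≤ μH[1] Sing :=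
    le_trans (circle_lower T ρinf hρpos) (measure_mono hsub)
  exact ⟨part1, hge,
    lt_of_lt_of_le (ENNReal.ofReal_pos.2 (mul_pos (mul_pos two_pos pi_pos) hρpos)) hge⟩
end

section
/- Let σ ∈ (0,1), λ > 1 with λ²√σ < 1, let T = σ/(1-σ), and suppose G : (0,T) × ℝ³ → [0,∞) is measurable with ∫_{I_N}∫_{ℝ³} G dx dt ≤ C(λ²σ)^{N-1} for all N ≥ 1, where I_N = [σ_{N-1},σ_N]. Then for every x⁰ ∈ ℝ³, setting r_N = √(T σ^N), one has (1/r_N) ∫_{T-r_N²}^{T} ∫_{B_{r_N}(x⁰)} G dx dt ≤ C' (λ²√σ)^N for a constant C' independent of N, and hence lim_{r→0} (1/r) ∫_{T-r²}^T ∫_{B_r(x⁰)} G dx dt = 0. -/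
open Real MeasureTheory
open scoped ENNReal

private lemma sqrt_pow_aux {x : ℝ} (hx : 0 ≤ x) (n : ℕ) :
    Real.sqrt (x ^ n) = (Real.sqrt x) ^ n := by
  induction n with
  | zero => simp
  | succ n ih => rw [pow_succ, pow_succ, Real.sqrt_mul (pow_nonneg hx n), ih]

/-- if `∫_{I_N}∫ G ≤ C(λ²σ)^{N-1}` and `λ²√σ < 1`, then, with
`r_N = √(Tσ^N)`, `(1/r_N)∫_{T-r_N²}^T ∫_{B_{r_N}(x⁰)} G ≤ C'(λ²√σ)^N` and hence
`(1/r)∫_{T-r²}^T ∫_{B_r(x⁰)} G → 0` as `r → 0`. -/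
theorem stmt11 (σ lam T C : ℝ) (hσ : σ ∈ Set.Ioo (0:ℝ) 1) (hlam : 1 < lam)
    (hcond : lam ^ 2 * Real.sqrt σ < 1) (hT : T = σ / (1 - σ)) (hC : 0 < C)
    (σp : ℕ → ℝ) (hσp : ∀ N, σp N = ∑ k ∈ Finset.range N, σ ^ (k + 1))
    (G : ℝ → EuclideanSpace ℝ (Fin 3) → ℝ≥0∞)
    (hmeas : Measurable (Function.uncurry G))
    (hbound : ∀ N ≥ 1, ∫⁻ t in Set.Icc (σp (N - 1)) (σp N), ∫⁻ x, G t x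
        ≤ ENNReal.ofReal (C * (lam ^ 2 * σ) ^ (N - 1))) :
    ∀ x0 : EuclideanSpace ℝ (Fin 3),
      (∃ C' : ℝ, 0 < C' ∧ ∀ N ≥ 1,
        (ENNReal.ofReal (Real.sqrt (T * σ ^ N)))⁻¹ *
          ∫⁻ t in Set.Icc (T - T * σ ^ N) T,
            ∫⁻ x in Metric.ball x0 (Real.sqrt (T * σ ^ N)), G t x
          ≤ ENNReal.ofReal (C' * (lam ^ 2 * Real.sqrt σ) ^ N)) ∧
      Filter.Tendsto (fun r : ℝ => (ENNReal.ofReal r)⁻¹ *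
          ∫⁻ t in Set.Icc (T - r ^ 2) T, ∫⁻ x in Metric.ball x0 r, G t x)
        (nhdsWithin 0 (Set.Ioi 0)) (nhds 0) := by
  obtain ⟨hσ0, hσ1⟩ := hσ
  have hlam0 : (0:ℝ) < lam := lt_trans one_pos hlam
  have hsq0 : 0 < Real.sqrt σ := Real.sqrt_pos.2 hσ0
  have hsq1 : Real.sqrt σ < 1 := by
    have h := Real.sqrt_lt_sqrt hσ0.le hσ1
    simpa using h
  set q := lam ^ 2 * Real.sqrt σ with hqdef
  have hq0 : 0 < q := by positivity
  have hq1 : q < 1 := hcond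
  set s := lam ^ 2 * σ with hsdef
  have hsq : s = q * Real.sqrt σ := by
    rw [hqdef, hsdef, mul_assoc, Real.mul_self_sqrt hσ0.le]
  have hs0 : 0 < s := by positivity
  have hs1 : s < 1 := by
    calc s = q * Real.sqrt σ := hsq
    _ < q := mul_lt_of_lt_one_right hq0 hsq1
    _ < 1 := hq1
  have h1σ : (0:ℝ) < 1 - σ := by linarith
  have hT0 : 0 < T := by rw [hT]; positivity
  have hσpow : ∀ N : ℕ, (0:ℝ) < σ ^ N := fun N => pow_pos hσ0 N
  have hσpT : ∀ N : ℕ, σp N = T - T * σ ^ N := by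
    intro N
    have hne : σ ≠ 1 := ne_of_lt hσ1
    rw [hσp N, hT]
    simp_rw [pow_succ']
    rw [← Finset.mul_sum, geom_sum_eq hne]
    have hne2 : σ - 1 ≠ 0 := sub_ne_zero.2 hne
    have hne3 : 1 - σ ≠ 0 := ne_of_gt h1σ
    field_simp
    ring
  have h1s : (0:ℝ) < 1 - s := by linarith
  set D := C / (1 - s) with hDdef
  have hD0 : 0 < D := by positivity
  have hmono : Monotone σp := by
    intro a b hab
    rw [hσpT a, hσpT b]
    have h := pow_le_pow_of_le_one hσ0.le hσ1.le hab
    nlinarith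
  have hlt : ∀ k, σp k < T := by
    intro k; rw [hσpT k]; nlinarith [hσpow k]
  have key : ∀ N : ℕ, ∫⁻ t in Set.Icc (σp N) T, ∫⁻ x, G t x
      ≤ ENNReal.ofReal (D * s ^ N) := by
    intro N
    have hσptend : Filter.Tendsto σp Filter.atTop (nhds T) := by
      have h1 := tendsto_pow_atTop_nhds_zero_of_lt_one hσ0.le hσ1
      have h2 := (tendsto_const_nhds (x := T) (f := Filter.atTop (α := ℕ))).sub
        (h1.const_mul T)
      simp only [mul_zero, sub_zero] at h2
      have : σp = fun N => T - T * σ ^ N := funext hσpT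
      rw [this]
      exact h2
    have hcov : Set.Ico (σp N) T ⊆
        ⋃ j : ℕ, Set.Icc (σp (N + j)) (σp (N + j + 1)) := by
      intro t ht
      obtain ⟨ht1, ht2⟩ := ht
      have hex : ∃ k, t < σp k :=
        ((hσptend.eventually (eventually_gt_nhds ht2)).exists)
      have hk : t < σp (Nat.find hex) := Nat.find_spec hex
      have hkN : N < Nat.find hex := by
        by_contra h
        push_neg at h
        exact absurd hk (not_lt.2 (le_trans (hmono h) ht1))
      have hk1 : σp (Nat.find hex - 1) ≤ t := by
        have h := Nat.find_min hex (show Nat.find hex - 1 < Nat.find hex by omega)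
        push_neg at h
        exact h
      refine Set.mem_iUnion.2 ⟨Nat.find hex - 1 - N, ?_⟩
      constructor
      · rw [show N + (Nat.find hex - 1 - N) = Nat.find hex - 1 by omega]
        exact hk1
      · rw [show N + (Nat.find hex - 1 - N) + 1 = Nat.find hex by omega]
        exact hk.le
    calc ∫⁻ t in Set.Icc (σp N) T, ∫⁻ x, G t x
        = ∫⁻ t in Set.Ico (σp N) T, ∫⁻ x, G t x :=
          (setLIntegral_congr Ico_ae_eq_Icc).symm
      _ ≤ ∫⁻ t in ⋃ j : ℕ, Set.Icc (σp (N+j)) (σp (N+j+1)), ∫⁻ x, G t x :=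
          lintegral_mono_set hcov
      _ ≤ ∑' j : ℕ, ∫⁻ t in Set.Icc (σp (N+j)) (σp (N+j+1)), ∫⁻ x, G t x :=
          lintegral_iUnion_le _ _
      _ ≤ ∑' j : ℕ, ENNReal.ofReal ((C * s ^ N) * s ^ j) := by
          apply ENNReal.tsum_le_tsum
          intro j
          have h := hbound (N + j + 1) (by omega)
          simp only [Nat.add_sub_cancel] at h
          refine le_trans h (le_of_eq ?_)
          congr 1
          rw [pow_add]
          ring
      _ = ENNReal.ofReal (D * s ^ N) := by
          rw [← ENNReal.ofReal_tsum_of_nonneg (fun j => by positivity)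
            ((summable_geometric_of_lt_one hs0.le hs1).mul_left _)]
          rw [tsum_mul_left, tsum_geometric_of_lt_one hs0.le hs1]
          congr 1
          rw [hDdef]
          ring
  have key2 : ∀ (N : ℕ) (r : ℝ) (x0 : EuclideanSpace ℝ (Fin 3)),
      ∫⁻ t in Set.Icc (T - T * σ ^ N) T, ∫⁻ x in Metric.ball x0 r, G t x
        ≤ ENNReal.ofReal (D * s ^ N) := by
    intro N r x0
    refine le_trans ?_ (key N)
    rw [hσpT N]
    exact lintegral_mono fun t => setLIntegral_le_lintegral _ _
  have hrN : ∀ N : ℕ, Real.sqrt (T * σ ^ N) = Real.sqrt T * (Real.sqrt σ) ^ N := by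
    intro N; rw [Real.sqrt_mul hT0.le, sqrt_pow_aux hσ0.le]
  have hrN0 : ∀ N : ℕ, 0 < Real.sqrt (T * σ ^ N) :=
    fun N => Real.sqrt_pos.2 (by positivity)
  have hsqT0 : (0:ℝ) < Real.sqrt T := Real.sqrt_pos.2 hT0
  have hinv : ∀ a b : ℝ, 0 < a → (ENNReal.ofReal a)⁻¹ * ENNReal.ofReal b
      = ENNReal.ofReal (b / a) := by
    intro a b ha
    rw [ENNReal.ofReal_div_of_pos ha, div_eq_mul_inv, mul_comm]
  intro x0
  constructor
  · refine ⟨D / Real.sqrt T, by positivity, ?_⟩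
    intro N hN
    calc (ENNReal.ofReal (Real.sqrt (T * σ ^ N)))⁻¹ *
          ∫⁻ t in Set.Icc (T - T * σ ^ N) T,
            ∫⁻ x in Metric.ball x0 (Real.sqrt (T * σ ^ N)), G t x
        ≤ (ENNReal.ofReal (Real.sqrt (T * σ ^ N)))⁻¹ * ENNReal.ofReal (D * s ^ N) :=
          mul_le_mul_right (key2 N _ x0) _
      _ = ENNReal.ofReal (D * s ^ N / Real.sqrt (T * σ ^ N)) := hinv _ _ (hrN0 N)
      _ = ENNReal.ofReal (D / Real.sqrt T * q ^ N) := by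
          congr 1
          rw [hrN N, hsq, mul_pow]
          have h2 : (Real.sqrt σ) ^ N ≠ 0 := by positivity
          field_simp
  · rw [ENNReal.tendsto_nhds_zero]
    intro ε hε
    set E := D / (Real.sqrt T * Real.sqrt σ) with hEdef
    have hE0 : 0 < E := by positivity
    have htend : Filter.Tendsto (fun N : ℕ => ENNReal.ofReal (E * q ^ N))
        Filter.atTop (nhds 0) := by
      rw [show (0:ℝ≥0∞) = ENNReal.ofReal 0 by simp]
      apply ENNReal.tendsto_ofReal
      simpa using (tendsto_pow_atTop_nhds_zero_of_lt_one hq0.le hq1).const_mul E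
    obtain ⟨N0, hN0⟩ := (htend.eventually_lt_const hε).exists
    have hrtend : Filter.Tendsto (fun j : ℕ => Real.sqrt (T * σ ^ j))
        Filter.atTop (nhds 0) := by
      simp_rw [hrN]
      simpa using (tendsto_pow_atTop_nhds_zero_of_lt_one hsq0.le hsq1).const_mul
        (Real.sqrt T)
    have hranti : ∀ a b : ℕ, a ≤ b →
        Real.sqrt (T * σ ^ b) ≤ Real.sqrt (T * σ ^ a) := by
      intro a b hab
      rw [hrN a, hrN b]
      exact mul_le_mul_of_nonneg_left
        (pow_le_pow_of_le_one hsq0.le hsq1.le hab) hsqT0.le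
    filter_upwards [Ioo_mem_nhdsGT_of_mem
      ⟨le_refl (0:ℝ), hrN0 (N0 + 1)⟩] with r hr
    obtain ⟨hr0, hrlt⟩ := hr
    have hex : ∃ M, Real.sqrt (T * σ ^ M) < r :=
      (hrtend.eventually_lt_const hr0).exists
    have hM : Real.sqrt (T * σ ^ Nat.find hex) < r := Nat.find_spec hex
    have hMbig : N0 + 1 < Nat.find hex := by
      by_contra h
      push_neg at h
      have := hranti _ _ h
      linarith
    set N := Nat.find hex - 1 with hNdef
    have hM1 : Nat.find hex = N + 1 := by omega
    have hN0le : N0 ≤ N := by omega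
    have hMprev : r ≤ Real.sqrt (T * σ ^ N) := by
      by_contra h
      push_neg at h
      exact Nat.find_min hex (show N < Nat.find hex by omega) h
    have hsub : Set.Icc (T - r ^ 2) T ⊆ Set.Icc (T - T * σ ^ N) T := by
      apply Set.Icc_subset_Icc _ le_rfl
      have h1 : r ^ 2 ≤ Real.sqrt (T * σ ^ N) ^ 2 :=
        pow_le_pow_left₀ hr0.le hMprev 2
      rw [Real.sq_sqrt (by positivity)] at h1
      linarith
    calc (ENNReal.ofReal r)⁻¹ *
          ∫⁻ t in Set.Icc (T - r ^ 2) T, ∫⁻ x in Metric.ball x0 r, G t x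
        ≤ (ENNReal.ofReal (Real.sqrt (T * σ ^ (N + 1))))⁻¹ *
          ∫⁻ t in Set.Icc (T - T * σ ^ N) T, ∫⁻ x in Metric.ball x0 r, G t x := by
          apply mul_le_mul'
          · exact ENNReal.inv_le_inv.2 (ENNReal.ofReal_le_ofReal
              (by rw [← hM1]; exact hM.le))
          · exact lintegral_mono_set hsub
      _ ≤ (ENNReal.ofReal (Real.sqrt (T * σ ^ (N + 1))))⁻¹ *
          ENNReal.ofReal (D * s ^ N) := mul_le_mul_right (key2 N r x0) _
      _ = ENNReal.ofReal (D * s ^ N / Real.sqrt (T * σ ^ (N + 1))) :=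
          hinv _ _ (hrN0 (N + 1))
      _ = ENNReal.ofReal (E * q ^ N) := by
          congr 1
          rw [hrN (N + 1), hsq, mul_pow, pow_succ, hEdef]
          have h2 : (Real.sqrt σ) ^ N ≠ 0 := by positivity
          field_simp
      _ ≤ ENNReal.ofReal (E * q ^ N0) := ENNReal.ofReal_le_ofReal
          (mul_le_mul_of_nonneg_left
            (pow_le_pow_of_le_one hq0.le hq1.le hN0le) hE0.le)
      _ ≤ ε := hN0.le
end
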